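/- arXiv:1606.00230 — 5 statements merged into one kernel-verified Lean document; each statement's English description precedes it below -/
import Mathlib

section
/- Let γ : ℝ × ℝ → ℝ² be continuously differentiable such that: γ(τ, x+1) = γ(τ,x) for all (τ,x); ∂ₓγ(τ,x) ≠ 0 for all (τ,x); for each τ ∈ [-1,1] the map x ↦ γ(τ,x) is injective on [0,1); and ⟨∂_τγ(τ,x), N_γ(τ,x)⟩ = 0 for all τ ∈ [-1,1] and all x ∈ ℝ. Then for every τ ∈ [-1,1] the image γ(τ, ℝ) equals the image γ(0, ℝ). -/
/-!
Near a point `p = γ(τ₀, x₀)`, the implicit function theorem applied to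
`(t, y) ↦ ⟪γ t y, ∂ₓγ(τ₀, x₀)⟫` gives a `C¹` function `X` with `X τ₀ = x₀` such that
`γ(t, X t)` stays on the normal line of `γ(τ₀, ·)` at `p`. The velocity `∂_τγ + X' ∂ₓγ` of this
point is tangent to `γ(t, ·)`, since the normal deformation vanishes, and orthogonal to
`∂ₓγ(τ₀, x₀)`; for `t` near `τ₀` these directions are transversal, so the velocity vanishes and
`p` lies on every nearby curve. Thus `{τ | p ∈ γ(τ, ℝ)}` is relatively open in `[-1, 1]`; it is
closed because, by periodicity, only `x ∈ [0, 1]` matters. By connectedness it contains all of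
`[-1, 1]` or none of it.
-/

open scoped RealInnerProductSpace

noncomputable section

/-- Rotation of the plane by a quarter turn: `J(a,b) = (-b,a)`. -/
def Jrot (v : EuclideanSpace ℝ (Fin 2)) : EuclideanSpace ℝ (Fin 2) :=
  WithLp.toLp 2 (fun i : Fin 2 => if i = 0 then -(v 1) else v 0)

/-- Partial derivative in the first (deformation) variable `τ`. -/
def pdTau (γ : ℝ → ℝ → EuclideanSpace ℝ (Fin 2)) (τ x : ℝ) : EuclideanSpace ℝ (Fin 2) :=
  deriv (fun t => γ t x) τ

/-- Partial derivative in the second (curve) variable `x`. -/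
def pdX (γ : ℝ → ℝ → EuclideanSpace ℝ (Fin 2)) (τ x : ℝ) : EuclideanSpace ℝ (Fin 2) :=
  deriv (fun y => γ τ y) x

/-- Unit tangent vector `T_γ = ∂ₓγ / ‖∂ₓγ‖`. -/
def unitTangent (γ : ℝ → ℝ → EuclideanSpace ℝ (Fin 2)) (τ x : ℝ) : EuclideanSpace ℝ (Fin 2) :=
  ‖pdX γ τ x‖⁻¹ • pdX γ τ x

/-- Unit normal vector `N_γ = J T_γ`. -/
def unitNormal (γ : ℝ → ℝ → EuclideanSpace ℝ (Fin 2)) (τ x : ℝ) : EuclideanSpace ℝ (Fin 2) :=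
  Jrot (unitTangent γ τ x)

/-- Infinitesimal deformation function `n_γ(τ,x) = ⟪∂_τ γ(τ,x), N_γ(τ,x)⟫`. -/
def deformationFn (γ : ℝ → ℝ → EuclideanSpace ℝ (Fin 2)) (τ x : ℝ) : ℝ :=
  ⟪pdTau γ τ x, unitNormal γ τ x⟫

open Filter Set Topology

lemma inner_fin_two (u v : EuclideanSpace ℝ (Fin 2)) : ⟪u, v⟫ = u 0 * v 0 + u 1 * v 1 := by
  simp [PiLp.inner_apply, Fin.sum_univ_two, mul_comm]

lemma Jrot_smul (a : ℝ) (v : EuclideanSpace ℝ (Fin 2)) : Jrot (a • v) = a • Jrot v := by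
  ext i
  fin_cases i <;> simp [Jrot]

lemma inner_Jrot_self (v : EuclideanSpace ℝ (Fin 2)) : ⟪v, Jrot v⟫ = 0 := by
  rw [inner_fin_two]
  simp [Jrot]
  ring

lemma eq_zero_of_inner_Jrot_eq_zero_of_inner_eq_zero {a b w : EuclideanSpace ℝ (Fin 2)}
    (hab : ⟪a, b⟫ ≠ 0) (ha : ⟪w, Jrot a⟫ = 0) (hb : ⟪w, b⟫ = 0) : w = 0 := by
  rw [inner_fin_two] at hab ha hb
  simp only [Jrot, PiLp.toLp_apply, Fin.isValue, if_true, if_false, one_ne_zero] at ha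
  have h0 : w 0 = 0 := mul_left_cancel₀ hab (by linear_combination a 0 * hb - b 1 * ha)
  have h1 : w 1 = 0 := mul_left_cancel₀ hab (by linear_combination a 1 * hb + b 0 * ha)
  ext i
  fin_cases i <;> simp [h0, h1]

lemma deformationFn_eq (γ : ℝ → ℝ → EuclideanSpace ℝ (Fin 2)) (τ x : ℝ) :
    deformationFn γ τ x = ‖pdX γ τ x‖⁻¹ * ⟪pdTau γ τ x, Jrot (pdX γ τ x)⟫ := by
  rw [deformationFn, unitNormal, unitTangent, Jrot_smul, real_inner_smul_right]

lemma deformationFn_eq_zero_iff {γ : ℝ → ℝ → EuclideanSpace ℝ (Fin 2)} {τ x : ℝ}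
    (h : pdX γ τ x ≠ 0) :
    deformationFn γ τ x = 0 ↔ ⟪pdTau γ τ x, Jrot (pdX γ τ x)⟫ = 0 := by
  simp [deformationFn_eq, h]

lemma ContinuousLinearMap.isInvertible_of_apply_one_ne_zero {𝕜 : Type*} [NormedField 𝕜]
    {L : 𝕜 →L[𝕜] 𝕜} (h : L 1 ≠ 0) : L.IsInvertible := by
  refine IsInvertible.of_inverse (g := (L 1)⁻¹ • ContinuousLinearMap.id 𝕜 𝕜) ?_ ?_ <;>
  · ext
    simp [inv_mul_cancel₀ h]

section Partials

variable {γ : ℝ → ℝ → EuclideanSpace ℝ (Fin 2)}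

lemma pdTau_eq_fderiv {τ x : ℝ} (hγ : DifferentiableAt ℝ (Function.uncurry γ) (τ, x)) :
    pdTau γ τ x = fderiv ℝ (Function.uncurry γ) (τ, x) (1, 0) := by
  exact (hγ.hasFDerivAt.comp_hasDerivAt τ
    ((hasDerivAt_id τ).prodMk (hasDerivAt_const τ x))).deriv

lemma pdX_eq_fderiv {τ x : ℝ} (hγ : DifferentiableAt ℝ (Function.uncurry γ) (τ, x)) :
    pdX γ τ x = fderiv ℝ (Function.uncurry γ) (τ, x) (0, 1) := by
  exact (hγ.hasFDerivAt.comp_hasDerivAt x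
    ((hasDerivAt_const x τ).prodMk (hasDerivAt_id x))).deriv

lemma continuous_uncurry_pdX (hγ : ContDiff ℝ 1 (Function.uncurry γ)) :
    Continuous (Function.uncurry (pdX γ)) := by
  have h : Function.uncurry (pdX γ) = fun q => fderiv ℝ (Function.uncurry γ) q (0, 1) := by
    funext q
    exact pdX_eq_fderiv (hγ.differentiable one_ne_zero q)
  rw [h]
  exact (hγ.continuous_fderiv one_ne_zero).clm_apply continuous_const

lemma hasDerivAt_family_apply {X : ℝ → ℝ} {x' σ : ℝ} (hX : HasDerivAt X x' σ)
    (hγ : DifferentiableAt ℝ (Function.uncurry γ) (σ, X σ)) :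
    HasDerivAt (fun t => γ t (X t)) (pdTau γ σ (X σ) + x' • pdX γ σ (X σ)) σ := by
  have h := hγ.hasFDerivAt.comp_hasDerivAt σ ((hasDerivAt_id σ).prodMk hX)
  have hdir : ((1 : ℝ), x') = (1, 0) + x' • (0, 1) := by simp
  rwa [hdir, map_add, map_smul, ← pdTau_eq_fderiv hγ, ← pdX_eq_fderiv hγ] at h

/-- A point moving along a line transversal to the curves, with velocity tangent to them,
does not move at all. -/
lemma hasDerivAt_family_apply_eq_zero {X : ℝ → ℝ} {x' σ c : ℝ} {e : EuclideanSpace ℝ (Fin 2)}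
    (hX : HasDerivAt X x' σ) (hγ : DifferentiableAt ℝ (Function.uncurry γ) (σ, X σ))
    (hline : ∀ᶠ t in 𝓝 σ, ⟪γ t (X t), e⟫ = c)
    (hn : ⟪pdTau γ σ (X σ), Jrot (pdX γ σ (X σ))⟫ = 0) (he : ⟪pdX γ σ (X σ), e⟫ ≠ 0) :
    HasDerivAt (fun t => γ t (X t)) 0 σ := by
  have hw := hasDerivAt_family_apply hX hγ
  convert hw using 1
  refine (eq_zero_of_inner_Jrot_eq_zero_of_inner_eq_zero he ?_ ?_).symm
  · rw [inner_add_left, real_inner_smul_left, hn, inner_Jrot_self, mul_zero, add_zero]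
  · have hw_e := hw.inner ℝ (hasDerivAt_const σ e)
    rw [inner_zero_right, zero_add] at hw_e
    exact hw_e.unique ((hasDerivAt_const σ c).congr_of_eventuallyEq hline)

lemma exists_implicit_curve (hγ : ContDiff ℝ 1 (Function.uncurry γ)) {τ₀ x₀ : ℝ}
    {e : EuclideanSpace ℝ (Fin 2)} (he : ⟪pdX γ τ₀ x₀, e⟫ ≠ 0) :
    ∃ X : ℝ → ℝ, X τ₀ = x₀ ∧
      ∀ᶠ t in 𝓝 τ₀, ContDiffAt ℝ 1 X t ∧ ⟪γ t (X t), e⟫ = ⟪γ τ₀ x₀, e⟫ := by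
  set f : ℝ × ℝ → ℝ := fun q => ⟪Function.uncurry γ q, e⟫
  have hf : ContDiffAt ℝ 1 f (τ₀, x₀) := (hγ.inner ℝ contDiff_const).contDiffAt
  have hinv : (fderiv ℝ f (τ₀, x₀) ∘L .inr ℝ ℝ ℝ).IsInvertible := by
    apply ContinuousLinearMap.isInvertible_of_apply_one_ne_zero
    have hd := hγ.differentiable one_ne_zero (τ₀, x₀)
    simpa [f, fderiv_inner_apply ℝ hd (differentiableAt_const e), ← pdX_eq_fderiv hd] using he
  refine ⟨hf.implicitFunction one_ne_zero hinv, hf.implicitFunction_apply_self one_ne_zero hinv, ?_⟩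
  filter_upwards [(hf.contDiffAt_implicitFunction one_ne_zero hinv).eventually (by simp),
    hf.eventually_apply_implicitFunction one_ne_zero hinv] with t hX hline
  exact ⟨hX, hline⟩

end Partials

section Range

variable {γ : ℝ → ℝ → EuclideanSpace ℝ (Fin 2)}

/-- By periodicity only parameters in the compact `[0, c]` matter, so the set is the projection
of a closed subset of `ℝ × [0, c]`. -/
lemma isClosed_setOf_mem_range (hγ : Continuous (Function.uncurry γ)) {c : ℝ} (hc : 0 < c)
    (hper : ∀ τ, Function.Periodic (γ τ) c) (p : EuclideanSpace ℝ (Fin 2)) :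
    IsClosed {τ | p ∈ range (γ τ)} := by
  have h : {τ | p ∈ range (γ τ)} = Prod.fst '' {q : ℝ × Icc 0 c | γ q.1 q.2 = p} := by
    ext τ
    rw [mem_ofPred_eq, ← (hper τ).image_Icc hc 0, zero_add]
    simp
  rw [h]
  exact isClosedMap_fst_of_compactSpace _ (isClosed_eq (by fun_prop) continuous_const)

theorem eventually_mem_range (hγ : ContDiff ℝ 1 (Function.uncurry γ)) {s : Set ℝ}
    (hs : s.OrdConnected) (hn : ∀ τ ∈ s, ∀ x, ⟪pdTau γ τ x, Jrot (pdX γ τ x)⟫ = 0)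
    {τ₀ x₀ : ℝ} (hτ₀ : τ₀ ∈ s) (hx₀ : pdX γ τ₀ x₀ ≠ 0) :
    ∀ᶠ τ in 𝓝[s] τ₀, γ τ₀ x₀ ∈ range (γ τ) := by
  set e := pdX γ τ₀ x₀
  have he : ⟪e, e⟫ ≠ 0 := inner_self_ne_zero.2 hx₀
  obtain ⟨X, hX₀, hX⟩ := exists_implicit_curve hγ he
  have htrans : ∀ᶠ t in 𝓝 τ₀, ⟪pdX γ t (X t), e⟫ ≠ 0 := by
    have hXc : ContinuousAt X τ₀ := hX.self_of_nhds.1.continuousAt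
    refine ContinuousAt.eventually_ne ?_ (by rwa [hX₀])
    exact ((continuous_uncurry_pdX hγ).continuousAt.comp
      (continuousAt_id.prodMk hXc)).inner continuousAt_const
  have hstat : ∀ᶠ t in 𝓝 τ₀, t ∈ s → HasDerivAt (fun t => γ t (X t)) 0 t := by
    filter_upwards [hX.eventually_nhds, htrans] with t ht hte hts
    exact hasDerivAt_family_apply_eq_zero
      (ht.self_of_nhds.1.differentiableAt one_ne_zero).hasDerivAt
      (hγ.differentiable one_ne_zero _) (ht.mono fun _ h => h.2) (hn t hts _) hte
  obtain ⟨ε, hε, hball⟩ := Metric.eventually_nhds_iff_ball.1 hstat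
  filter_upwards [inter_mem_nhdsWithin s (Metric.ball_mem_nhds τ₀ hε)] with τ hτ
  have hconst := (hs.convex.inter (convex_ball τ₀ ε)).norm_image_sub_le_of_norm_hasDerivWithin_le
    (f' := 0) (C := 0) (fun t ht => (hball t ht.2 ht.1).hasDerivWithinAt) (by simp)
    hτ ⟨hτ₀, Metric.mem_ball_self hε⟩
  exact ⟨X τ, by simpa [hX₀, sub_eq_zero, eq_comm] using hconst⟩

theorem eventually_mem_range_iff (hγ : ContDiff ℝ 1 (Function.uncurry γ)) {c : ℝ} (hc : 0 < c)
    (hper : ∀ τ, Function.Periodic (γ τ) c) {s : Set ℝ} (hs : s.OrdConnected)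
    (hx : ∀ τ ∈ s, ∀ x, pdX γ τ x ≠ 0)
    (hn : ∀ τ ∈ s, ∀ x, ⟪pdTau γ τ x, Jrot (pdX γ τ x)⟫ = 0) {τ₀ : ℝ} (hτ₀ : τ₀ ∈ s)
    (p : EuclideanSpace ℝ (Fin 2)) :
    ∀ᶠ τ in 𝓝[s] τ₀, (p ∈ range (γ τ₀) ↔ p ∈ range (γ τ)) := by
  by_cases hp : p ∈ range (γ τ₀)
  · obtain ⟨x₀, rfl⟩ := hp
    filter_upwards [eventually_mem_range hγ hs hn hτ₀ (hx τ₀ hτ₀ x₀)] with τ hτ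
    exact iff_of_true (mem_range_self x₀) hτ
  · have hopen := (isClosed_setOf_mem_range hγ.continuous hc hper p).isOpen_compl
    filter_upwards [nhdsWithin_le_nhds (hopen.mem_nhds hp)] with τ hτ
    exact iff_of_false hp hτ

theorem range_eq_range_of_inner_pdTau_Jrot_pdX_eq_zero (hγ : ContDiff ℝ 1 (Function.uncurry γ))
    {c : ℝ} (hc : 0 < c) (hper : ∀ τ, Function.Periodic (γ τ) c) {s : Set ℝ}
    (hs : s.OrdConnected) (hx : ∀ τ ∈ s, ∀ x, pdX γ τ x ≠ 0)
    (hn : ∀ τ ∈ s, ∀ x, ⟪pdTau γ τ x, Jrot (pdX γ τ x)⟫ = 0) {τ₁ τ₂ : ℝ} (hτ₁ : τ₁ ∈ s)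
    (hτ₂ : τ₂ ∈ s) :
    range (γ τ₁) = range (γ τ₂) := by
  ext p
  exact hs.isPreconnected.induction₂ (fun a b => p ∈ range (γ a) ↔ p ∈ range (γ b))
    (fun τ₀ hτ₀ => eventually_mem_range_iff hγ hc hper hs hx hn hτ₀ p)
    (fun _ _ _ _ _ _ => Iff.trans) (fun _ _ _ _ => Iff.symm) hτ₁ hτ₂

end Range

theorem constant_family_of_deformationFn_eq_zero_general
    (γ : ℝ → ℝ → EuclideanSpace ℝ (Fin 2))
    (hγ : ContDiff ℝ 1 (Function.uncurry γ))
    (hper : ∀ τ x, γ τ (x + 1) = γ τ x)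
    (hx : ∀ τ x, pdX γ τ x ≠ 0)
    (hn : ∀ τ ∈ Set.Icc (-1 : ℝ) 1, ∀ x : ℝ, deformationFn γ τ x = 0) :
    ∀ τ ∈ Set.Icc (-1 : ℝ) 1, Set.range (γ τ) = Set.range (γ 0) := by
  intro τ hτ
  exact range_eq_range_of_inner_pdTau_Jrot_pdX_eq_zero hγ one_pos hper ordConnected_Icc
    (fun τ _ x => hx τ x) (fun τ hτ x => (deformationFn_eq_zero_iff (hx τ x)).1 (hn τ hτ x)) hτ
    ⟨by norm_num, by norm_num⟩

/-- A `C¹` family of simple closed curves whose infinitesimal deformation function vanishes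
identically is a constant family: for every `τ ∈ [-1,1]`, the image of `γ(τ,·)` coincides with
the image of `γ(0,·)`. -/
theorem constant_family_of_deformationFn_eq_zero
    (γ : ℝ → ℝ → EuclideanSpace ℝ (Fin 2))
    (hγ : ContDiff ℝ 1 (Function.uncurry γ))
    (hper : ∀ τ x, γ τ (x + 1) = γ τ x)
    (hx : ∀ τ x, pdX γ τ x ≠ 0)
    (hinj : ∀ τ ∈ Set.Icc (-1 : ℝ) 1, Set.InjOn (γ τ) (Set.Ico 0 1))
    (hn : ∀ τ ∈ Set.Icc (-1 : ℝ) 1, ∀ x : ℝ, deformationFn γ τ x = 0) :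
    ∀ τ ∈ Set.Icc (-1 : ℝ) 1, Set.range (γ τ) = Set.range (γ 0) :=
  constant_family_of_deformationFn_eq_zero_general γ hγ hper hx hn

end
end

section
/- Let γ ≥ 3 be a real number and let a : ℕ → ℝ (defined for indices j ≥ 1) satisfy M := sup_{j ≥ 1} j^γ · |a_j| < ∞. Then for every integer q ≥ 1 the series ∑_{s=1}^∞ a_{s·q} converges absolutely, and q^γ · | ∑_{s=1}^∞ a_{s·q} − a_q | ≤ (ζ(3) − 1) · M, where ζ(3) = ∑_{n=1}^∞ n^{−3}. -/
/-!
Write `ζ(3) - 1 = ∑_{m ≥ 2} m⁻³`. For `m ≥ 1` the hypothesis at `j = m q` gives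
`q^γ |a_{mq}| ≤ M / m^γ ≤ M / m³`, since `γ ≥ 3`. So the series `∑_{s ≥ 1} a_{sq}` is dominated
termwise by `M q^{-γ} ∑_{m ≥ 1} m⁻³`, and removing the common first term `m = 1` (which is
`a_q` on the left) leaves the claimed bound.
-/

lemma summable_one_div_nat_add_one_pow_three :
    Summable (fun n : ℕ => (1 : ℝ) / ((n : ℝ) + 1) ^ 3) :=
  ((summable_nat_add_iff 1).mpr (Real.summable_one_div_nat_pow (p := 3).mpr (by norm_num))).congr
    fun n => by push_cast; rfl

lemma abs_tsum_sub_zero_le_tsum_sub_zero {f g : ℕ → ℝ} (hg : Summable g)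
    (hfg : ∀ n, |f n| ≤ g n) : |(∑' n, f n) - f 0| ≤ (∑' n, g n) - g 0 := by
  have hf : Summable f := hg.of_norm_bounded (fun n => (Real.norm_eq_abs _).trans_le (hfg n))
  have hf' : Summable (fun n => |f (n + 1)|) := (summable_nat_add_iff 1).mpr hf.abs
  have hg' : Summable (fun n => g (n + 1)) := (summable_nat_add_iff 1).mpr hg
  rw [hf.tsum_eq_zero_add, hg.tsum_eq_zero_add, add_sub_cancel_left, add_sub_cancel_left]
  calc |∑' n, f (n + 1)| ≤ ∑' n, |f (n + 1)| := by
        simpa only [Real.norm_eq_abs] using norm_tsum_le_tsum_norm (f := fun n => f (n + 1)) hf'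
    _ ≤ ∑' n, g (n + 1) := hf'.tsum_le_tsum (fun n => hfg (n + 1)) hg'

lemma abs_apply_mul_le_of_weighted_bound {γ M : ℝ} {a : ℕ → ℝ} (hγ : 3 ≤ γ)
    (hM : ∀ j : ℕ, 1 ≤ j → (j : ℝ) ^ γ * |a j| ≤ M) {m q : ℕ} (hm : 1 ≤ m) (hq : 1 ≤ q) :
    |a (m * q)| ≤ M / (q : ℝ) ^ γ * (1 / (m : ℝ) ^ 3) := by
  have hm' : (1 : ℝ) ≤ m := by exact_mod_cast hm
  have hq' : (0 : ℝ) < q := by exact_mod_cast hq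
  have hpow : (m : ℝ) ^ 3 ≤ (m : ℝ) ^ γ := by
    exact_mod_cast Real.rpow_le_rpow_of_exponent_le hm' hγ
  have hmq : (m : ℝ) ^ 3 * (q : ℝ) ^ γ * |a (m * q)| ≤ M :=
    calc (m : ℝ) ^ 3 * (q : ℝ) ^ γ * |a (m * q)|
        ≤ (m : ℝ) ^ γ * (q : ℝ) ^ γ * |a (m * q)| := by gcongr
      _ = ((m * q : ℕ) : ℝ) ^ γ * |a (m * q)| := by
          rw [Nat.cast_mul, Real.mul_rpow (by positivity) (by positivity)]
      _ ≤ M := hM _ (Nat.one_le_iff_ne_zero.mpr (by positivity))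
  rw [div_mul_div_comm, mul_one, le_div_iff₀ (by positivity)]
  linarith

/-- Divisor-sum estimate: if `sup_{j≥1} j^γ |a_j| ≤ M` with `γ ≥ 3`, then for every `q ≥ 1`
the series `∑_{s≥1} a_{sq}` converges absolutely and
`q^γ · |∑_{s≥1} a_{sq} − a_q| ≤ (ζ(3) − 1) · M`. -/
theorem divisor_sum_estimate
    (γ : ℝ) (hγ : 3 ≤ γ) (a : ℕ → ℝ) (M : ℝ)
    (hM : ∀ j : ℕ, 1 ≤ j → (j : ℝ) ^ γ * |a j| ≤ M) :
    ∀ q : ℕ, 1 ≤ q →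
      Summable (fun s : ℕ => |a ((s + 1) * q)|) ∧
      (q : ℝ) ^ γ * |(∑' s : ℕ, a ((s + 1) * q)) - a q| ≤
        ((∑' n : ℕ, (1 : ℝ) / ((n : ℝ) + 1) ^ 3) - 1) * M := by
  intro q hq
  have hζ := summable_one_div_nat_add_one_pow_three.mul_left (M / (q : ℝ) ^ γ)
  have hbound (s : ℕ) : |a ((s + 1) * q)| ≤ M / (q : ℝ) ^ γ * (1 / ((s : ℝ) + 1) ^ 3) := by
    exact_mod_cast abs_apply_mul_le_of_weighted_bound hγ hM (Nat.le_add_left 1 s) hq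
  refine ⟨hζ.of_nonneg_of_le (fun _ => abs_nonneg _) hbound, ?_⟩
  have htail := abs_tsum_sub_zero_le_tsum_sub_zero hζ hbound
  simp only [zero_add, one_mul, Nat.cast_zero, one_pow, div_one, mul_one, tsum_mul_left]
    at htail
  calc (q : ℝ) ^ γ * |(∑' s : ℕ, a ((s + 1) * q)) - a q|
      ≤ (q : ℝ) ^ γ * (M / (q : ℝ) ^ γ * ∑' n : ℕ, 1 / ((n : ℝ) + 1) ^ 3 - M / (q : ℝ) ^ γ) := by
        gcongr
    _ = ((∑' n : ℕ, (1 : ℝ) / ((n : ℝ) + 1) ^ 3) - 1) * M := by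
        field_simp
end

section
/- Let γ be a real number with 3 < γ < 4, and let X_γ be the set of sequences a : ℕ → ℝ (indices j ≥ 1) such that j^γ · a_j → 0 as j → ∞. Then for every a ∈ X_γ and every integer q ≥ 1 the series (T a)_q := ∑_{s=1}^∞ a_{s·q} converges absolutely, the sequence T a again belongs to X_γ, and the map T : X_γ → X_γ is a bijection. -/
open Filter ArithmeticFunction

/-! Auxiliary lemmas for the divisor-sum operator. -/

private lemma DS_summable {γ : ℝ} (hγ : 1 < γ) :
    Summable (fun s : ℕ+ => ((s : ℕ) : ℝ) ^ (-γ)) := by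
  have h : Summable (fun n : ℕ => (n : ℝ) ^ (-γ)) :=
    Real.summable_nat_rpow.mpr (by linarith)
  exact h.comp_injective PNat.coe_injective

private lemma DS_rpow_pos (γ : ℝ) (j : ℕ+) : 0 < ((j : ℕ) : ℝ) ^ γ :=
  Real.rpow_pos_of_pos (by exact_mod_cast j.pos) _

private lemma DS_abs_le {γ : ℝ} {a : ℕ+ → ℝ} {c : ℝ} {j : ℕ+}
    (h : |((j : ℕ) : ℝ) ^ γ * a j| ≤ c) : |a j| ≤ c * ((j : ℕ) : ℝ) ^ (-γ) := by
  have hp := DS_rpow_pos γ j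
  rw [abs_mul, abs_of_pos hp] at h
  rw [Real.rpow_neg (by positivity), ← div_eq_mul_inv, le_div_iff₀ hp, mul_comm]
  exact h

private lemma DS_bound {γ : ℝ} {a : ℕ+ → ℝ}
    (ha : Tendsto (fun j : ℕ+ => ((j : ℕ) : ℝ) ^ γ * a j) atTop (nhds 0)) :
    ∃ C : ℝ, ∀ j : ℕ+, |a j| ≤ C * ((j : ℕ) : ℝ) ^ (-γ) := by
  obtain ⟨N, hN⟩ := Metric.tendsto_atTop.mp ha 1 one_pos
  refine ⟨1 + ∑ j ∈ Finset.Iic N, |((j : ℕ) : ℝ) ^ γ * a j|, fun j => ?_⟩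
  have hs : (0:ℝ) ≤ ∑ j ∈ Finset.Iic N, |((j : ℕ) : ℝ) ^ γ * a j| :=
    Finset.sum_nonneg fun _ _ => abs_nonneg _
  apply DS_abs_le
  rcases le_or_gt N j with h | h
  · have := hN j h
    rw [Real.dist_eq, sub_zero] at this
    linarith
  · have : |((j : ℕ) : ℝ) ^ γ * a j| ≤ ∑ i ∈ Finset.Iic N, |((i : ℕ) : ℝ) ^ γ * a i| :=
      Finset.single_le_sum (f := fun i : ℕ+ => |((i : ℕ) : ℝ) ^ γ * a i|)
        (fun _ _ => abs_nonneg _) (Finset.mem_Iic.mpr h.le)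
    linarith

private lemma DS_mul_rpow (γ : ℝ) (s q : ℕ+) :
    (((s * q : ℕ+) : ℕ) : ℝ) ^ (-γ) = ((s : ℕ) : ℝ) ^ (-γ) * ((q : ℕ) : ℝ) ^ (-γ) := by
  rw [PNat.mul_coe, Nat.cast_mul, Real.mul_rpow (by positivity) (by positivity)]

private lemma DS_pointwise {γ : ℝ} {a : ℕ+ → ℝ} {C : ℝ} {q s : ℕ+}
    (hba : |a (s * q)| ≤ C * (((s * q : ℕ+) : ℕ) : ℝ) ^ (-γ)) {w : ℝ} (hw : |w| ≤ 1) :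
    |w * a (s * q)| ≤ C * ((q : ℕ) : ℝ) ^ (-γ) * ((s : ℕ) : ℝ) ^ (-γ) := by
  calc |w * a (s * q)| = |w| * |a (s * q)| := abs_mul _ _
    _ ≤ 1 * (C * (((s * q : ℕ+) : ℕ) : ℝ) ^ (-γ)) :=
        mul_le_mul hw hba (abs_nonneg _) zero_le_one
    _ = C * ((q : ℕ) : ℝ) ^ (-γ) * ((s : ℕ) : ℝ) ^ (-γ) := by rw [DS_mul_rpow]; ring

private lemma DS_summable_weighted {γ : ℝ} (hγ : 1 < γ) {a : ℕ+ → ℝ} {C : ℝ}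
    (hb : ∀ j : ℕ+, |a j| ≤ C * ((j : ℕ) : ℝ) ^ (-γ)) (w : ℕ+ → ℝ)
    (hw : ∀ s, |w s| ≤ 1) (q : ℕ+) :
    Summable (fun s : ℕ+ => |w s * a (s * q)|) :=
  Summable.of_nonneg_of_le (fun _ => abs_nonneg _)
    (fun s => DS_pointwise (hb _) (hw s)) ((DS_summable hγ).mul_left _)

private lemma DS_tendsto {γ : ℝ} (hγ : 1 < γ) {a : ℕ+ → ℝ} {C : ℝ}
    (hb : ∀ j : ℕ+, |a j| ≤ C * ((j : ℕ) : ℝ) ^ (-γ))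
    (ha : Tendsto (fun j : ℕ+ => ((j : ℕ) : ℝ) ^ γ * a j) atTop (nhds 0)) :
    ∀ (w : ℕ+ → ℝ), (∀ s, |w s| ≤ 1) →
    Tendsto (fun q : ℕ+ => ((q : ℕ) : ℝ) ^ γ * ∑' s : ℕ+, w s * a (s * q)) atTop (nhds 0) := by
  intro w hw
  set Z := ∑' s : ℕ+, ((s : ℕ) : ℝ) ^ (-γ) with hZdef
  have hZ1 : 1 ≤ Z := by
    have h := Summable.le_tsum (DS_summable hγ) 1 (fun s _ => by positivity)
    simpa using h
  rw [Metric.tendsto_atTop] at ha ⊢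
  intro ε hε
  have hZ0 : 0 < Z := by linarith
  have hε' : 0 < ε / (2 * Z) := by positivity
  obtain ⟨N, hN⟩ := ha _ hε'
  refine ⟨N, fun q hq => ?_⟩
  rw [Real.dist_eq, sub_zero]
  set ε' := ε / (2 * Z) with hε'def
  have key : ∀ j : ℕ+, N ≤ j → |a j| ≤ ε' * ((j : ℕ) : ℝ) ^ (-γ) := by
    intro j hj
    refine DS_abs_le (le_of_lt ?_)
    have := hN j hj
    rwa [Real.dist_eq, sub_zero] at this
  have hb' : ∀ s : ℕ+, |w s * a (s * q)| ≤ ε' * ((q : ℕ) : ℝ) ^ (-γ) * ((s : ℕ) : ℝ) ^ (-γ) := by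
    intro s
    refine DS_pointwise (key (s * q) (hq.trans ?_)) (hw s)
    exact le_mul_of_one_le_left' s.one_le
  have hsum1 : Summable (fun s : ℕ+ => |w s * a (s * q)|) :=
    DS_summable_weighted hγ hb w hw q
  have h1 : |∑' s : ℕ+, w s * a (s * q)| ≤ ∑' s : ℕ+, |w s * a (s * q)| := by
    have := norm_tsum_le_tsum_norm (f := fun s : ℕ+ => w s * a (s * q))
      (hsum1.congr fun s => (Real.norm_eq_abs _).symm)
    simpa [Real.norm_eq_abs, abs_mul] using this
  have h2 : ∑' s : ℕ+, |w s * a (s * q)| ≤ ε' * ((q : ℕ) : ℝ) ^ (-γ) * Z := by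
    have := Summable.tsum_le_tsum hb' hsum1 ((DS_summable hγ).mul_left (ε' * ((q : ℕ) : ℝ) ^ (-γ)))
    rwa [tsum_mul_left] at this
  have hqp := DS_rpow_pos γ q
  calc |((q : ℕ) : ℝ) ^ γ * ∑' s : ℕ+, w s * a (s * q)|
      = ((q : ℕ) : ℝ) ^ γ * |∑' s : ℕ+, w s * a (s * q)| := by
        rw [abs_mul, abs_of_pos hqp]
    _ ≤ ((q : ℕ) : ℝ) ^ γ * (ε' * ((q : ℕ) : ℝ) ^ (-γ) * Z) :=
        mul_le_mul_of_nonneg_left (h1.trans h2) hqp.le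
    _ = ε' * Z := by
        rw [Real.rpow_neg (by positivity)]
        field_simp
    _ = ε / 2 := by rw [hε'def]; field_simp
    _ < ε := by linarith

/-- The finite set of ordered factorizations of `n` in `ℕ+`. -/
private def DSD (n : ℕ+) : Finset (ℕ+ × ℕ+) :=
  (Finset.Iic n ×ˢ Finset.Iic n).filter (fun p => p.1 * p.2 = n)

private lemma DSD_mem {n : ℕ+} {p : ℕ+ × ℕ+} : p ∈ DSD n ↔ p.1 * p.2 = n := by
  constructor
  · intro h; exact (Finset.mem_filter.mp h).2
  · intro h
    refine Finset.mem_filter.mpr ⟨Finset.mem_product.mpr ⟨?_, ?_⟩, h⟩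
    · exact Finset.mem_Iic.mpr (h ▸ PNat.le_of_dvd (dvd_mul_right _ _))
    · exact Finset.mem_Iic.mpr (h ▸ PNat.le_of_dvd (dvd_mul_left _ _))

private lemma DSD_coe (n : ℕ+) :
    ((fun p : ℕ+ × ℕ+ => p.1 * p.2) ⁻¹' {n}) = ↑(DSD n) := by
  ext p
  simp [DSD_mem, Set.mem_preimage]

private lemma DS_regroup {γ : ℝ} (hγ : 1 < γ) {a : ℕ+ → ℝ} {C : ℝ}
    (hb : ∀ j : ℕ+, |a j| ≤ C * ((j : ℕ) : ℝ) ^ (-γ)) (u : ℕ+ × ℕ+ → ℝ)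
    (hu : ∀ p, |u p| ≤ 1) (q : ℕ+) :
    ∑' b : ℕ+, ∑' c : ℕ+, u (b, c) * a (b * c * q) =
      ∑' n : ℕ+, (∑ p ∈ DSD n, u p) * a (n * q) := by
  set F : ℕ+ × ℕ+ → ℝ := fun p => u p * a (p.1 * p.2 * q) with hF
  have hFs : Summable F := by
    apply Summable.of_abs
    refine Summable.of_nonneg_of_le (fun p => abs_nonneg _) (fun p => ?_)
      (((DS_summable hγ).mul_of_nonneg (DS_summable hγ)
        (fun s => by positivity) (fun s => by positivity)).mul_left (C * ((q:ℕ):ℝ)^(-γ)))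
    have h1 : (((p.1 * p.2 * q : ℕ+) : ℕ) : ℝ) ^ (-γ)
        = ((p.1 : ℕ) : ℝ) ^ (-γ) * ((p.2 : ℕ) : ℝ) ^ (-γ) * ((q : ℕ) : ℝ) ^ (-γ) := by
      rw [DS_mul_rpow, DS_mul_rpow]
    calc |F p| = |u p| * |a (p.1 * p.2 * q)| := abs_mul _ _
      _ ≤ 1 * (C * (((p.1 * p.2 * q : ℕ+) : ℕ) : ℝ) ^ (-γ)) :=
          mul_le_mul (hu p) (hb _) (abs_nonneg _) zero_le_one
      _ = C * ((q:ℕ):ℝ)^(-γ) * (((p.1:ℕ):ℝ)^(-γ) * ((p.2:ℕ):ℝ)^(-γ)) := by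
          rw [h1]; ring
  have h1 : ∑' b : ℕ+, ∑' c : ℕ+, u (b, c) * a (b * c * q) = ∑' p, F p :=
    (Summable.tsum_prod' hFs fun b => hFs.prod_factor b).symm
  rw [h1, ← (hFs.hasSum.tsum_fiberwise (fun p => p.1 * p.2)).tsum_eq]
  refine tsum_congr fun n => ?_
  have h2 : ∑' (p : (fun p : ℕ+ × ℕ+ => p.1 * p.2) ⁻¹' {n}), F p
      = ∑' (p : (↑(DSD n) : Set (ℕ+ × ℕ+))), F p := by
    rw [DSD_coe]
  rw [h2, Finset.tsum_subtype' (DSD n) F, Finset.sum_mul]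
  refine Finset.sum_congr rfl fun p hp => ?_
  rw [hF]
  simp only []
  rw [DSD_mem.mp hp]

/-- The Möbius function as a real-valued function on `ℕ+`. -/
private def DSmu : ℕ+ → ℝ := fun s => ((moebius (s : ℕ) : ℤ) : ℝ)

private lemma DSmu_le (s : ℕ+) : |DSmu s| ≤ 1 := by
  unfold DSmu
  exact_mod_cast abs_moebius_le_one

private lemma DSD_sum_snd (n : ℕ+) :
    (∑ p ∈ DSD n, DSmu p.2) = if n = 1 then 1 else 0 := by
  have h1 : (∑ p ∈ DSD n, moebius (p.2 : ℕ)) = ∑ d ∈ (n : ℕ).divisors, moebius d := by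
    refine Finset.sum_bij (fun p _ => ((p.2 : ℕ+) : ℕ)) ?_ ?_ ?_ ?_
    · intro p hp
      rw [Nat.mem_divisors]
      refine ⟨?_, n.ne_zero⟩
      exact PNat.dvd_iff.mp (Dvd.intro_left _ (DSD_mem.mp hp))
    · intro p hp p' hp' h
      have h2 : p.2 = p'.2 := PNat.coe_injective h
      have h1 : p.1 = p'.1 := by
        have := (DSD_mem.mp hp).trans (DSD_mem.mp hp').symm
        rw [h2] at this
        exact mul_right_cancel this
      exact Prod.ext h1 h2
    · intro d hd
      obtain ⟨hdvd, -⟩ := Nat.mem_divisors.mp hd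
      have hd0 : 0 < d := Nat.pos_of_mem_divisors hd
      have he0 : 0 < (n : ℕ) / d := Nat.div_pos (Nat.le_of_dvd n.pos hdvd) hd0
      refine ⟨(⟨(n : ℕ) / d, he0⟩, ⟨d, hd0⟩), ?_, rfl⟩
      apply DSD_mem.mpr
      apply PNat.coe_injective
      push_cast
      exact Nat.div_mul_cancel hdvd
    · intro p hp; rfl
  have h2 : (∑ d ∈ (n : ℕ).divisors, moebius d) = if (n : ℕ) = 1 then 1 else 0 := by
    rw [← coe_mul_zeta_apply, moebius_mul_coe_zeta, one_apply]
  calc (∑ p ∈ DSD n, DSmu p.2)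
      = (((∑ p ∈ DSD n, moebius (p.2 : ℕ)) : ℤ) : ℝ) := by unfold DSmu; push_cast; rfl
    _ = if n = 1 then 1 else 0 := by
        rw [h1, h2]
        by_cases h : n = 1
        · simp [h]
        · have : (n : ℕ) ≠ 1 := fun hc => h (PNat.coe_eq_one_iff.mp hc)
          simp [h, this]

private lemma DSD_sum_fst (n : ℕ+) :
    (∑ p ∈ DSD n, DSmu p.1) = if n = 1 then 1 else 0 := by
  rw [← DSD_sum_snd n]
  refine Finset.sum_nbij' (fun p => p.swap) (fun p => p.swap) ?_ ?_ ?_ ?_ ?_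
  · intro p hp
    exact DSD_mem.mpr (by rw [Prod.fst_swap, Prod.snd_swap, mul_comm]; exact DSD_mem.mp hp)
  · intro p hp
    exact DSD_mem.mpr (by rw [Prod.fst_swap, Prod.snd_swap, mul_comm]; exact DSD_mem.mp hp)
  · intro p _; rfl
  · intro p _; rfl
  · intro p _; rfl

private lemma DS_TS {γ : ℝ} (hγ : 1 < γ) {a : ℕ+ → ℝ} {C : ℝ}
    (hb : ∀ j : ℕ+, |a j| ≤ C * ((j : ℕ) : ℝ) ^ (-γ)) (q : ℕ+) :
    ∑' t : ℕ+, ∑' s : ℕ+, DSmu s * a (s * (t * q)) = a q := by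
  have e2 : ∑' t : ℕ+, ∑' s : ℕ+, DSmu s * a (s * (t * q))
      = ∑' t : ℕ+, ∑' s : ℕ+, (fun p : ℕ+ × ℕ+ => DSmu p.2) (t, s) * a (t * s * q) := by
    refine tsum_congr fun t => tsum_congr fun s => ?_
    rw [show s * (t * q) = t * s * q by rw [← mul_assoc, mul_comm s t]]
  rw [e2, DS_regroup hγ hb _ (fun p => DSmu_le p.2) q]
  have e3 : ∀ n : ℕ+, (∑ p ∈ DSD n, DSmu p.2) * a (n * q)
      = (if n = 1 then a (n * q) else 0) := by
    intro n; rw [DSD_sum_snd n]; split <;> simp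
  rw [tsum_congr e3, tsum_eq_single 1 (fun n hn => by simp [hn])]
  simp

private lemma DS_ST {γ : ℝ} (hγ : 1 < γ) {a : ℕ+ → ℝ} {C : ℝ}
    (hb : ∀ j : ℕ+, |a j| ≤ C * ((j : ℕ) : ℝ) ^ (-γ)) (q : ℕ+) :
    ∑' t : ℕ+, DSmu t * ∑' s : ℕ+, a (s * (t * q)) = a q := by
  have e1 : ∑' t : ℕ+, DSmu t * ∑' s : ℕ+, a (s * (t * q))
      = ∑' t : ℕ+, ∑' s : ℕ+, (fun p : ℕ+ × ℕ+ => DSmu p.1) (t, s) * a (t * s * q) := by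
    refine tsum_congr fun t => ?_
    rw [← tsum_mul_left]
    refine tsum_congr fun s => ?_
    rw [show s * (t * q) = t * s * q by rw [← mul_assoc, mul_comm s t]]
  rw [e1, DS_regroup hγ hb _ (fun p => DSmu_le p.1) q]
  have e3 : ∀ n : ℕ+, (∑ p ∈ DSD n, DSmu p.1) * a (n * q)
      = (if n = 1 then a (n * q) else 0) := by
    intro n; rw [DSD_sum_fst n]; split <;> simp
  rw [tsum_congr e3, tsum_eq_single 1 (fun n hn => by simp [hn])]
  simp

/-- The divisor-sum operator `(T a)_q = ∑_{s≥1} a_{sq}` is a well-defined bijection of the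
space `X_γ = {a : j^γ a_j → 0}` for `3 < γ < 4`; in particular, for `a ∈ X_γ` all the series
`∑_{s≥1} a_{sq}` converge absolutely. -/
theorem divisor_sum_operator_bijective
    (γ : ℝ) (hγ1 : 3 < γ) (hγ2 : γ < 4) :
    let X : Set (ℕ+ → ℝ) :=
      {a | Filter.Tendsto (fun j : ℕ+ => ((j : ℕ) : ℝ) ^ γ * a j) Filter.atTop (nhds 0)}
    let T : (ℕ+ → ℝ) → (ℕ+ → ℝ) := fun a q => ∑' s : ℕ+, a (s * q)
    (∀ a ∈ X, ∀ q : ℕ+, Summable (fun s : ℕ+ => |a (s * q)|)) ∧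
    Set.BijOn T X X := by
  intro X T
  have hγ : 1 < γ := by linarith
  have hX : ∀ a : ℕ+ → ℝ, a ∈ X ↔
      Tendsto (fun j : ℕ+ => ((j : ℕ) : ℝ) ^ γ * a j) atTop (nhds 0) := fun a => Iff.rfl
  -- the inverse operator
  set S : (ℕ+ → ℝ) → (ℕ+ → ℝ) := fun a q => ∑' s : ℕ+, DSmu s * a (s * q) with hSdef
  have hTw : ∀ a : ℕ+ → ℝ, ∀ q : ℕ+, T a q = ∑' s : ℕ+, (1 : ℝ) * a (s * q) := by
    intro a q
    exact tsum_congr fun s => (one_mul _).symm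
  have hTX : ∀ a ∈ X, T a ∈ X := by
    intro a ha
    obtain ⟨C, hb⟩ := DS_bound ((hX a).mp ha)
    have h := DS_tendsto hγ hb ((hX a).mp ha) (fun _ => (1 : ℝ)) (fun _ => by norm_num)
    refine (hX (T a)).mpr ?_
    have he : (fun q : ℕ+ => ((q : ℕ) : ℝ) ^ γ * T a q)
        = fun q : ℕ+ => ((q : ℕ) : ℝ) ^ γ * ∑' s : ℕ+, (1 : ℝ) * a (s * q) := by
      funext q; rw [hTw a q]
    rw [he]
    exact h
  have hSX : ∀ a ∈ X, S a ∈ X := by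
    intro a ha
    obtain ⟨C, hb⟩ := DS_bound ((hX a).mp ha)
    exact (hX (S a)).mpr (DS_tendsto hγ hb ((hX a).mp ha) DSmu DSmu_le)
  have hST : ∀ a ∈ X, S (T a) = a := by
    intro a ha
    obtain ⟨C, hb⟩ := DS_bound ((hX a).mp ha)
    funext q
    exact DS_ST hγ hb q
  have hTS : ∀ a ∈ X, T (S a) = a := by
    intro a ha
    obtain ⟨C, hb⟩ := DS_bound ((hX a).mp ha)
    funext q
    exact DS_TS hγ hb q
  refine ⟨?_, hTX, ?_, ?_⟩
  · intro a ha q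
    obtain ⟨C, hb⟩ := DS_bound ((hX a).mp ha)
    exact (DS_summable_weighted hγ hb (fun _ => (1 : ℝ)) (fun _ => by norm_num) q).congr
      (fun s => by rw [one_mul])
  · intro a ha b hb hab
    rw [← hST a ha, ← hST b hb, hab]
  · intro b hb
    exact ⟨S b, hSX b hb, hTS b hb⟩
end

section
/- Let γ be a real number with 3 < γ < 4. Then there exists a constant C > 0 such that for every integer q ≥ 2: q^{γ−2} · ∑_{s=1}^∞ ∑_{j ≥ 1, j ≠ s·q} |s·q − j|^{−4} · j^{−(γ−1)} ≤ C · q^{γ−4} (in particular, the double series converges). -/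
/-- The term `|sq − j|⁻⁴ j^{−(γ−1)}` of the remainder double sum, for `j ≥ 1`, `j ≠ sq`
(here `s ≥ 1` is encoded as `s + 1` with `s : ℕ`). -/
noncomputable def remTerm (γ : ℝ) (q s j : ℕ) : ℝ :=
  if 1 ≤ j ∧ j ≠ (s + 1) * q then
    |((((s + 1) * q : ℕ) : ℝ) - (j : ℝ))| ^ (-(4 : ℝ)) * (j : ℝ) ^ (-(γ - 1))
  else 0


lemma zeta_summable {p : ℝ} (hp : 1 < p) :
    Summable (fun n : ℕ => (n : ℝ) ^ (-p)) :=
  Real.summable_nat_rpow.mpr (by linarith)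

lemma zeta_nonneg (p : ℝ) : 0 ≤ ∑' n : ℕ, (n : ℝ) ^ (-p) :=
  tsum_nonneg fun n => Real.rpow_nonneg (Nat.cast_nonneg n) _

lemma shifted_zeta_summable {p : ℝ} (hp : 1 < p) :
    Summable (fun s : ℕ => ((s + 1 : ℕ) : ℝ) ^ (-p)) :=
  (summable_nat_add_iff 1).mpr (zeta_summable hp)

lemma shifted_zeta_le {p : ℝ} (hp : 1 < p) :
    ∑' s : ℕ, ((s + 1 : ℕ) : ℝ) ^ (-p) ≤ ∑' n : ℕ, (n : ℝ) ^ (-p) := by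
  have h := Summable.sum_add_tsum_nat_add (f := fun n : ℕ => (n : ℝ) ^ (-p)) 1 (zeta_summable hp)
  have h0 : 0 ≤ ∑ i ∈ Finset.range 1, ((i : ℝ)) ^ (-p) :=
    Finset.sum_nonneg fun i _ => Real.rpow_nonneg (Nat.cast_nonneg i) _
  linarith [h]

lemma h4_summable (m : ℕ) :
    Summable (fun j : ℕ => if j = m then (0:ℝ) else |(m : ℝ) - j| ^ (-(4:ℝ))) := by
  rw [← summable_nat_add_iff (m + 1)]
  have key : ∀ j : ℕ, (if j + (m+1) = m then (0:ℝ) else |(m : ℝ) - ((j + (m+1) : ℕ) : ℝ)| ^ (-(4:ℝ)))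
      = ((j + 1 : ℕ) : ℝ) ^ (-(4:ℝ)) := by
    intro j
    rw [if_neg (by omega)]
    have h1 : (m : ℝ) - ((j + (m+1) : ℕ) : ℝ) = -(((j + 1 : ℕ) : ℝ)) := by push_cast; ring
    rw [h1, abs_neg, abs_of_nonneg (by positivity)]
  simpa only [key] using shifted_zeta_summable (p := 4) (by norm_num)

lemma h4_tsum_le (m : ℕ) :
    ∑' j : ℕ, (if j = m then (0:ℝ) else |(m : ℝ) - j| ^ (-(4:ℝ)))
      ≤ 2 * ∑' n : ℕ, (n : ℝ) ^ (-(4:ℝ)) := by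
  set g : ℕ → ℝ := fun n => (n : ℝ) ^ (-(4:ℝ)) with hg
  have hgsum : Summable g := zeta_summable (by norm_num)
  have hgnn : ∀ n, 0 ≤ g n := fun n => Real.rpow_nonneg (Nat.cast_nonneg n) _
  set f1 : ℕ → ℝ := fun j => if j < m then g (m - j) else 0 with hf1
  set f2 : ℕ → ℝ := fun j => if m < j then g (j - m) else 0 with hf2
  have hsplit : ∀ j : ℕ, (if j = m then (0:ℝ) else |(m : ℝ) - j| ^ (-(4:ℝ))) = f1 j + f2 j := by
    intro j
    rcases lt_trichotomy j m with h | h | h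
    · rw [if_neg h.ne, hf1, hf2]
      simp only [if_pos h, if_neg (by omega : ¬ m < j), add_zero]
      congr 2
      rw [abs_of_nonneg (by
        have : (j:ℝ) ≤ m := Nat.cast_le.mpr h.le
        linarith), Nat.cast_sub h.le]
    · simp [hf1, hf2, h]
    · rw [if_neg h.ne', hf1, hf2]
      simp only [if_neg (by omega : ¬ j < m), if_pos h, zero_add]
      congr 2
      rw [abs_of_nonpos (by
        have : (m:ℝ) ≤ j := Nat.cast_le.mpr h.le
        linarith), Nat.cast_sub h.le]
      ring
  have hf1sum : Summable f1 := by
    apply summable_of_ne_finset_zero (s := Finset.range m)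
    intro j hj
    simp only [Finset.mem_range, not_lt] at hj
    simp [hf1, not_lt.mpr hj]
  have hf2sum : Summable f2 := by
    rw [← summable_nat_add_iff (m + 1)]
    have key : ∀ j : ℕ, f2 (j + (m+1)) = g (j + 1) := by
      intro j
      simp only [hf2, if_pos (by omega : m < j + (m+1))]
      congr 1
      omega
    simpa only [key] using (summable_nat_add_iff 1).mpr hgsum
  have hf1le : ∑' j, f1 j ≤ ∑' n, g n := by
    apply Summable.tsum_le_tsum_of_inj (fun j => if j < m then m - j else m + 1 + j)
    · intro a b hab
      dsimp only at hab
      split_ifs at hab <;> omega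
    · intro c _; exact hgnn c
    · intro j
      by_cases h : j < m
      · simp [hf1, h]
      · simp only [hf1, if_neg h]; exact hgnn _
    · exact hf1sum
    · exact hgsum
  have hf2le : ∑' j, f2 j ≤ ∑' n, g n := by
    have e1 := Summable.sum_add_tsum_nat_add (f := f2) (m+1) hf2sum
    have e2 := Summable.sum_add_tsum_nat_add (f := g) 1 hgsum
    have hz : ∑ i ∈ Finset.range (m+1), f2 i = 0 := by
      apply Finset.sum_eq_zero
      intro i hi
      simp only [Finset.mem_range] at hi
      simp only [hf2]
      rw [if_neg (by omega)]
    have key : ∀ j : ℕ, f2 (j + (m+1)) = g (j + 1) := by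
      intro j
      simp only [hf2, if_pos (by omega : m < j + (m+1))]
      congr 1
      omega
    rw [hz, zero_add] at e1
    rw [← e1]
    simp only [key]
    rw [← e2]
    have : 0 ≤ ∑ i ∈ Finset.range 1, g i := Finset.sum_nonneg fun i _ => hgnn i
    linarith
  calc ∑' j : ℕ, (if j = m then (0:ℝ) else |(m : ℝ) - j| ^ (-(4:ℝ)))
      = ∑' j, (f1 j + f2 j) := by simp only [hsplit]
    _ = ∑' j, f1 j + ∑' j, f2 j := Summable.tsum_add hf1sum hf2sum
    _ ≤ ∑' n, g n + ∑' n, g n := add_le_add hf1le hf2le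
    _ = 2 * ∑' n, g n := by ring

lemma remTerm_nonneg (γ : ℝ) (q s j : ℕ) : 0 ≤ remTerm γ q s j := by
  unfold remTerm
  split
  · exact mul_nonneg (Real.rpow_nonneg (abs_nonneg _) _) (Real.rpow_nonneg (Nat.cast_nonneg _) _)
  · exact le_rfl

lemma two_rpow_neg_four : (2:ℝ) ^ (-(4:ℝ)) = 1/16 := by
  rw [show (-(4:ℝ)) = ((-4 : ℤ) : ℝ) by norm_num, Real.rpow_intCast]
  norm_num

lemma per_s (γ : ℝ) (hγ1 : 3 < γ) (hγ2 : γ < 4) (q s : ℕ) (hq : 1 ≤ q) :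
    Summable (fun j : ℕ => remTerm γ q s j) ∧
    ∑' j : ℕ, remTerm γ q s j ≤
      16 * (∑' n : ℕ, (n : ℝ) ^ (-(γ-1))) * ((((s+1)*q : ℕ) : ℝ)) ^ (-(4:ℝ)) +
      (2:ℝ) ^ γ * (∑' n : ℕ, (n : ℝ) ^ (-(4:ℝ))) * ((((s+1)*q : ℕ) : ℝ)) ^ (-(γ-1)) := by
  set m : ℕ := (s+1)*q with hmdef
  have hm : 1 ≤ m := Nat.one_le_iff_ne_zero.mpr (by positivity)
  have hmR : (1:ℝ) ≤ (m:ℝ) := by exact_mod_cast hm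
  have hm2 : (0:ℝ) < (m:ℝ)/2 := by linarith
  have hp : (1:ℝ) < γ - 1 := by linarith
  set h4 : ℕ → ℝ := fun j => if j = m then (0:ℝ) else |(m : ℝ) - j| ^ (-(4:ℝ)) with hh4
  set A : ℕ → ℝ := fun j => 16 * (m:ℝ) ^ (-(4:ℝ)) * (j:ℝ) ^ (-(γ-1)) with hA
  set B : ℕ → ℝ := fun j => (2:ℝ) ^ (γ-1) * (m:ℝ) ^ (-(γ-1)) * h4 j with hB
  have h4nn : ∀ j, 0 ≤ h4 j := by
    intro j
    simp only [hh4]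
    split
    · exact le_rfl
    · exact Real.rpow_nonneg (abs_nonneg _) _
  have hAnn : ∀ j, 0 ≤ A j := by
    intro j
    exact mul_nonneg (mul_nonneg (by norm_num) (Real.rpow_nonneg (Nat.cast_nonneg _) _))
      (Real.rpow_nonneg (Nat.cast_nonneg _) _)
  have hBnn : ∀ j, 0 ≤ B j := by
    intro j
    exact mul_nonneg (mul_nonneg (Real.rpow_nonneg (by norm_num) _)
      (Real.rpow_nonneg (Nat.cast_nonneg _) _)) (h4nn j)
  have key : ∀ j : ℕ, remTerm γ q s j ≤ A j + B j := by
    intro j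
    rw [remTerm]
    split
    case isTrue hj =>
      obtain ⟨hj1, hjm⟩ := hj
      have hjR : (1:ℝ) ≤ (j:ℝ) := by exact_mod_cast hj1
      by_cases hc : 2 * j ≤ m
      · -- small j: |m - j| ≥ m/2
        have hcR : (2:ℝ) * j ≤ m := by exact_mod_cast hc
        have h1 : (m:ℝ)/2 ≤ |(m:ℝ) - j| := by
          rw [abs_of_nonneg (by linarith)]
          linarith
        have h2 : |(m:ℝ) - j| ^ (-(4:ℝ)) ≤ ((m:ℝ)/2) ^ (-(4:ℝ)) :=
          Real.rpow_le_rpow_of_nonpos hm2 h1 (by norm_num)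
        have h3 : ((m:ℝ)/2) ^ (-(4:ℝ)) = 16 * (m:ℝ) ^ (-(4:ℝ)) := by
          rw [Real.div_rpow (Nat.cast_nonneg _) (by norm_num), two_rpow_neg_four]
          ring
        have : |((m:ℕ):ℝ) - (j:ℝ)| ^ (-(4:ℝ)) * (j:ℝ) ^ (-(γ-1)) ≤ A j := by
          rw [hA]
          dsimp only
          rw [← h3]
          exact mul_le_mul_of_nonneg_right h2 (Real.rpow_nonneg (Nat.cast_nonneg _) _)
        exact le_trans this (le_add_of_nonneg_right (hBnn j))
      · -- large j: j > m/2
        push_neg at hc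
        have hcR : (m:ℝ) < 2 * j := by exact_mod_cast hc
        have h1 : (j:ℝ) ^ (-(γ-1)) ≤ ((m:ℝ)/2) ^ (-(γ-1)) :=
          Real.rpow_le_rpow_of_nonpos hm2 (by linarith) (by linarith)
        have h3 : ((m:ℝ)/2) ^ (-(γ-1)) = (2:ℝ) ^ (γ-1) * (m:ℝ) ^ (-(γ-1)) := by
          rw [Real.div_rpow (Nat.cast_nonneg _) (by norm_num), Real.rpow_neg (by norm_num : (0:ℝ) ≤ 2)]
          rw [div_inv_eq_mul]
          ring
        have hh : |((m:ℕ):ℝ) - (j:ℝ)| ^ (-(4:ℝ)) = h4 j := by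
          simp only [hh4]
          rw [if_neg hjm]
        have : |((m:ℕ):ℝ) - (j:ℝ)| ^ (-(4:ℝ)) * (j:ℝ) ^ (-(γ-1)) ≤ B j := by
          rw [hB]
          dsimp only
          rw [← hh]
          calc |((m:ℕ):ℝ) - (j:ℝ)| ^ (-(4:ℝ)) * (j:ℝ) ^ (-(γ-1))
              ≤ |((m:ℕ):ℝ) - (j:ℝ)| ^ (-(4:ℝ)) * (((m:ℝ)/2) ^ (-(γ-1))) :=
                mul_le_mul_of_nonneg_left h1 (Real.rpow_nonneg (abs_nonneg _) _)
            _ = (2:ℝ) ^ (γ-1) * (m:ℝ) ^ (-(γ-1)) * |((m:ℕ):ℝ) - (j:ℝ)| ^ (-(4:ℝ)) := by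
                rw [h3]; ring
        exact le_trans this (le_add_of_nonneg_left (hAnn j))
    case isFalse hj =>
      exact add_nonneg (hAnn j) (hBnn j)
  have hAsum : Summable A := ((zeta_summable hp).mul_left _)
  have hBsum : Summable B := ((h4_summable m).mul_left _)
  have hABsum : Summable (fun j => A j + B j) := hAsum.add hBsum
  have hTsum : Summable (fun j : ℕ => remTerm γ q s j) :=
    Summable.of_nonneg_of_le (remTerm_nonneg γ q s) key hABsum
  refine ⟨hTsum, ?_⟩
  have step1 : ∑' j : ℕ, remTerm γ q s j ≤ ∑' j, (A j + B j) :=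
    Summable.tsum_le_tsum key hTsum hABsum
  have step2 : ∑' j, (A j + B j) = ∑' j, A j + ∑' j, B j := Summable.tsum_add hAsum hBsum
  have hAts : ∑' j, A j = 16 * (m:ℝ) ^ (-(4:ℝ)) * ∑' n : ℕ, (n:ℝ) ^ (-(γ-1)) := tsum_mul_left
  have hBts : ∑' j, B j = (2:ℝ) ^ (γ-1) * (m:ℝ) ^ (-(γ-1)) * ∑' j, h4 j := tsum_mul_left
  have hBle : ∑' j, B j ≤ (2:ℝ) ^ γ * (∑' n : ℕ, (n:ℝ) ^ (-(4:ℝ))) * (m:ℝ) ^ (-(γ-1)) := by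
    rw [hBts]
    have h1 : ∑' j, h4 j ≤ 2 * ∑' n : ℕ, (n:ℝ) ^ (-(4:ℝ)) := h4_tsum_le m
    have h2 : (0:ℝ) ≤ (2:ℝ) ^ (γ-1) * (m:ℝ) ^ (-(γ-1)) :=
      mul_nonneg (Real.rpow_nonneg (by norm_num) _) (Real.rpow_nonneg (Nat.cast_nonneg _) _)
    calc (2:ℝ) ^ (γ-1) * (m:ℝ) ^ (-(γ-1)) * ∑' j, h4 j
        ≤ (2:ℝ) ^ (γ-1) * (m:ℝ) ^ (-(γ-1)) * (2 * ∑' n : ℕ, (n:ℝ) ^ (-(4:ℝ))) :=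
          mul_le_mul_of_nonneg_left h1 h2
      _ = ((2:ℝ) ^ (γ-1) * 2) * (∑' n : ℕ, (n:ℝ) ^ (-(4:ℝ))) * (m:ℝ) ^ (-(γ-1)) := by ring
      _ = (2:ℝ) ^ γ * (∑' n : ℕ, (n:ℝ) ^ (-(4:ℝ))) * (m:ℝ) ^ (-(γ-1)) := by
          congr 2
          rw [Real.rpow_sub (by norm_num : (0:ℝ) < 2), Real.rpow_one]
          field_simp
  calc ∑' j : ℕ, remTerm γ q s j ≤ ∑' j, A j + ∑' j, B j := by rw [← step2]; exact step1
    _ ≤ 16 * (∑' n : ℕ, (n : ℝ) ^ (-(γ-1))) * ((m : ℝ)) ^ (-(4:ℝ)) +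
        (2:ℝ) ^ γ * (∑' n : ℕ, (n : ℝ) ^ (-(4:ℝ))) * ((m : ℝ)) ^ (-(γ-1)) := by
        rw [hAts]
        exact add_le_add (le_of_eq (by ring)) hBle

set_option maxHeartbeats 1000000 in
/-- Combined remainder estimate: for `3 < γ < 4` there is `C > 0` such that for all `q ≥ 2`,
`q^{γ−2} ∑_{s≥1} ∑_{j≥1, j≠sq} |sq−j|⁻⁴ j^{−(γ−1)} ≤ C q^{γ−4}`
(in particular, the double series converges). -/
theorem remainder_double_sum_estimate
    (γ : ℝ) (hγ1 : 3 < γ) (hγ2 : γ < 4) :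
    ∃ C > 0, ∀ q : ℕ, 2 ≤ q →
      (∀ s : ℕ, Summable (fun j : ℕ => remTerm γ q s j)) ∧
      Summable (fun s : ℕ => ∑' j : ℕ, remTerm γ q s j) ∧
      (q : ℝ) ^ (γ - 2) * (∑' s : ℕ, ∑' j : ℕ, remTerm γ q s j) ≤
        C * (q : ℝ) ^ (γ - 4) := by
  have hp : (1:ℝ) < γ - 1 := by linarith
  have h4p : (1:ℝ) < (4:ℝ) := by norm_num
  set Zp : ℝ := ∑' n : ℕ, (n : ℝ) ^ (-(γ-1)) with hZp
  set Z4 : ℝ := ∑' n : ℕ, (n : ℝ) ^ (-(4:ℝ)) with hZ4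
  have hZpnn : 0 ≤ Zp := zeta_nonneg _
  have hZ4nn : 0 ≤ Z4 := zeta_nonneg _
  set C : ℝ := 16 * Zp * Z4 + (2:ℝ) ^ γ * Z4 * Zp + 1 with hC
  have hCpos : 0 < C := by positivity
  refine ⟨C, hCpos, fun q hq => ?_⟩
  have hq1 : 1 ≤ q := by omega
  have hqR : (1:ℝ) ≤ (q:ℝ) := by exact_mod_cast hq1
  have hqR0 : (0:ℝ) < (q:ℝ) := by linarith
  -- the per-s bound, rewritten with the product split
  set G : ℕ → ℝ := fun s =>
    16 * Zp * ((s+1 : ℕ) : ℝ) ^ (-(4:ℝ)) * (q:ℝ) ^ (-(4:ℝ)) +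
    (2:ℝ) ^ γ * Z4 * ((s+1 : ℕ) : ℝ) ^ (-(γ-1)) * (q:ℝ) ^ (-(γ-1)) with hG
  have hsplit : ∀ (s : ℕ) (p : ℝ), ((((s+1)*q : ℕ) : ℝ)) ^ (-p)
      = ((s+1 : ℕ) : ℝ) ^ (-p) * (q:ℝ) ^ (-p) := by
    intro s p
    rw [Nat.cast_mul, Real.mul_rpow (Nat.cast_nonneg _) (Nat.cast_nonneg _)]
  have hFle : ∀ s : ℕ, ∑' j : ℕ, remTerm γ q s j ≤ G s := by
    intro s
    have h := (per_s γ hγ1 hγ2 q s hq1).2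
    rw [hsplit s 4, hsplit s (γ-1)] at h
    calc ∑' j : ℕ, remTerm γ q s j ≤ _ := h
      _ = G s := by rw [hG]; ring
  have hFnn : ∀ s : ℕ, 0 ≤ ∑' j : ℕ, remTerm γ q s j :=
    fun s => tsum_nonneg (remTerm_nonneg γ q s)
  have hGsum : Summable G := by
    apply Summable.add
    · exact ((shifted_zeta_summable h4p).mul_left _).mul_right _
    · exact ((shifted_zeta_summable hp).mul_left _).mul_right _
  have hFsum : Summable (fun s : ℕ => ∑' j : ℕ, remTerm γ q s j) :=
    Summable.of_nonneg_of_le hFnn hFle hGsum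
  refine ⟨fun s => (per_s γ hγ1 hγ2 q s hq1).1, hFsum, ?_⟩
  have hGts : ∑' s, G s =
      16 * Zp * (q:ℝ) ^ (-(4:ℝ)) * (∑' s : ℕ, ((s+1 : ℕ) : ℝ) ^ (-(4:ℝ))) +
      (2:ℝ) ^ γ * Z4 * (q:ℝ) ^ (-(γ-1)) * (∑' s : ℕ, ((s+1 : ℕ) : ℝ) ^ (-(γ-1))) := by
    rw [hG, Summable.tsum_add (((shifted_zeta_summable h4p).mul_left _).mul_right _)
      (((shifted_zeta_summable hp).mul_left _).mul_right _)]
    congr 1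
    · rw [tsum_mul_right, tsum_mul_left]; ring
    · rw [tsum_mul_right, tsum_mul_left]; ring
  have hGle : ∑' s, G s ≤ 16 * Zp * Z4 * (q:ℝ) ^ (-(4:ℝ)) +
      (2:ℝ) ^ γ * Z4 * Zp * (q:ℝ) ^ (-(γ-1)) := by
    rw [hGts]
    apply add_le_add
    · have h1 := shifted_zeta_le h4p
      have h2 : (0:ℝ) ≤ 16 * Zp * (q:ℝ) ^ (-(4:ℝ)) := by positivity
      calc 16 * Zp * (q:ℝ) ^ (-(4:ℝ)) * (∑' s : ℕ, ((s+1 : ℕ) : ℝ) ^ (-(4:ℝ)))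
          ≤ 16 * Zp * (q:ℝ) ^ (-(4:ℝ)) * Z4 := mul_le_mul_of_nonneg_left h1 h2
        _ = 16 * Zp * Z4 * (q:ℝ) ^ (-(4:ℝ)) := by ring
    · have h1 := shifted_zeta_le hp
      have h2 : (0:ℝ) ≤ (2:ℝ) ^ γ * Z4 * (q:ℝ) ^ (-(γ-1)) := by positivity
      calc (2:ℝ) ^ γ * Z4 * (q:ℝ) ^ (-(γ-1)) * (∑' s : ℕ, ((s+1 : ℕ) : ℝ) ^ (-(γ-1)))
          ≤ (2:ℝ) ^ γ * Z4 * (q:ℝ) ^ (-(γ-1)) * Zp := mul_le_mul_of_nonneg_left h1 h2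
        _ = (2:ℝ) ^ γ * Z4 * Zp * (q:ℝ) ^ (-(γ-1)) := by ring
  have hFts : ∑' s : ℕ, ∑' j : ℕ, remTerm γ q s j ≤ 16 * Zp * Z4 * (q:ℝ) ^ (-(4:ℝ)) +
      (2:ℝ) ^ γ * Z4 * Zp * (q:ℝ) ^ (-(γ-1)) :=
    le_trans (Summable.tsum_le_tsum hFle hFsum hGsum) hGle
  have hpow1 : (q:ℝ) ^ (γ-2) * (q:ℝ) ^ (-(4:ℝ)) ≤ (q:ℝ) ^ (γ-4) := by
    rw [← Real.rpow_add hqR0]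
    exact Real.rpow_le_rpow_of_exponent_le hqR (by linarith)
  have hpow2 : (q:ℝ) ^ (γ-2) * (q:ℝ) ^ (-(γ-1)) ≤ (q:ℝ) ^ (γ-4) := by
    rw [← Real.rpow_add hqR0]
    exact Real.rpow_le_rpow_of_exponent_le hqR (by linarith)
  have hqpow : (0:ℝ) ≤ (q:ℝ) ^ (γ-2) := Real.rpow_nonneg (le_of_lt hqR0) _
  have hqpow4 : (0:ℝ) < (q:ℝ) ^ (γ-4) := Real.rpow_pos_of_pos hqR0 _
  calc (q : ℝ) ^ (γ - 2) * (∑' s : ℕ, ∑' j : ℕ, remTerm γ q s j)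
      ≤ (q : ℝ) ^ (γ - 2) * (16 * Zp * Z4 * (q:ℝ) ^ (-(4:ℝ)) +
          (2:ℝ) ^ γ * Z4 * Zp * (q:ℝ) ^ (-(γ-1))) := mul_le_mul_of_nonneg_left hFts hqpow
    _ = 16 * Zp * Z4 * ((q:ℝ) ^ (γ-2) * (q:ℝ) ^ (-(4:ℝ))) +
        (2:ℝ) ^ γ * Z4 * Zp * ((q:ℝ) ^ (γ-2) * (q:ℝ) ^ (-(γ-1))) := by ring
    _ ≤ 16 * Zp * Z4 * (q:ℝ) ^ (γ-4) + (2:ℝ) ^ γ * Z4 * Zp * (q:ℝ) ^ (γ-4) := by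
        apply add_le_add
        · exact mul_le_mul_of_nonneg_left hpow1 (by positivity)
        · exact mul_le_mul_of_nonneg_left hpow2 (by positivity)
    _ ≤ C * (q:ℝ) ^ (γ-4) := by
        rw [hC]
        nlinarith [hqpow4]
end

section
/- Let K ⊆ ℝ² be a compact convex set with nonempty interior, let q ≥ 2 be an integer, and let p : ℤ/qℤ → K be a q-tuple of points maximizing the cyclic perimeter P(p) := ∑_{i ∈ ℤ/qℤ} ‖p(i+1) − p(i)‖ over all functions ℤ/qℤ → K. Then for every i ∈ ℤ/qℤ, the point p(i) lies on the topological boundary of K, and p(i+1) ≠ p(i). -/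
/-!
If a vertex `p i` of a perimeter-maximizing polygon is moved inside `K`, only its two sides change,
so `p i` maximizes `x ↦ ‖x - p (i - 1)‖ + ‖x - p (i + 1)‖` on `K`. In dimension at least two this
function has no local maximum, hence `p i` is not an interior point. If `p (i + 1) = p i`, the
triangle inequality makes every point of `K` a maximizer, in particular an interior one.
-/

open Module Filter Topology
open scoped RealInnerProductSpace

section InnerProductSpace

variable {E : Type*} [NormedAddCommGroup E] [InnerProductSpace ℝ E]

theorem exists_ne_zero_inner_eq_zero (hE : 2 ≤ finrank ℝ E) (w : E) :
    ∃ d : E, d ≠ 0 ∧ ⟪w, d⟫ = 0 := by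
  have : FiniteDimensional ℝ E := Module.finite_of_finrank_pos (by omega)
  have hspan : finrank ℝ (ℝ ∙ w) ≤ 1 := by
    simpa using finrank_span_le_card ({w} : Set E)
  have horth : (ℝ ∙ w)ᗮ ≠ ⊥ := by
    intro h
    have := Submodule.finrank_add_finrank_orthogonal (ℝ ∙ w)
    rw [h, finrank_bot] at this
    omega
  obtain ⟨d, hd, hd0⟩ := Submodule.exists_mem_ne_zero_of_ne_bot horth
  exact ⟨d, hd0, Submodule.mem_orthogonal_singleton_iff_inner_right.1 hd⟩

theorem norm_lt_norm_add_of_inner_eq_zero {u v : E} (huv : ⟪u, v⟫ = 0) (hv : v ≠ 0) :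
    ‖u‖ < ‖u + v‖ := by
  have := norm_add_sq_eq_norm_sq_add_norm_sq_real huv
  have := norm_pos_iff.2 hv
  nlinarith [norm_nonneg u, norm_nonneg (u + v)]

theorem two_mul_dist_le_dist_add_dist_sub (x a d : E) :
    2 * dist x a ≤ dist (x + d) a + dist (x - d) a := by
  calc 2 * dist x a = ‖(x + d - a) + (x - d - a)‖ := by
        rw [dist_eq_norm, show x + d - a + (x - d - a) = (2 : ℝ) • (x - a) by rw [two_smul]; abel,
          norm_smul, Real.norm_two]
    _ ≤ dist (x + d) a + dist (x - d) a := by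
        rw [dist_eq_norm, dist_eq_norm]; exact norm_add_le _ _

/-- Moving `x` orthogonally to `x - b` strictly increases the distance to `b` in both
directions, while the distance to `a` is convex, so one of the two directions increases the sum. -/
theorem not_isLocalMax_dist_add_dist (hE : 2 ≤ finrank ℝ E) (a b x : E) :
    ¬IsLocalMax (fun y => dist y a + dist y b) x := by
  intro hmax
  obtain ⟨d, hd0, hd⟩ := exists_ne_zero_inner_eq_zero hE (x - b)
  have hplus : Tendsto (fun t : ℝ => x + t • d) (𝓝 0) (𝓝 x) :=
    (continuous_const.add (continuous_id.smul continuous_const)).tendsto' 0 x (by simp)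
  have hminus : Tendsto (fun t : ℝ => x - t • d) (𝓝 0) (𝓝 x) :=
    (continuous_const.sub (continuous_id.smul continuous_const)).tendsto' 0 x (by simp)
  obtain ⟨t, ⟨hplus, hminus⟩, ht⟩ :=
    (((hplus.eventually hmax).and (hminus.eventually hmax)).filter_mono nhdsWithin_le_nhds
      |>.and self_mem_nhdsWithin).exists (f := 𝓝[≠] (0 : ℝ))
  have hfar : ∀ s : ℝ, s ≠ 0 → dist x b < dist (x + s • d) b := fun s hs => by
    rw [dist_eq_norm, dist_eq_norm, add_sub_right_comm]
    exact norm_lt_norm_add_of_inner_eq_zero (by rw [inner_smul_right, hd, mul_zero])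
      (smul_ne_zero hs hd0)
  have hconv := two_mul_dist_le_dist_add_dist_sub x a (t • d)
  have := hfar t ht
  have := hfar (-t) (neg_ne_zero.2 ht)
  rw [neg_smul, ← sub_eq_add_neg] at this
  linarith

end InnerProductSpace

section CyclicPerimeter

variable {α : Type*} [PseudoMetricSpace α] {q : ℕ} [NeZero q]

def cyclicPerimeter (p : ZMod q → α) : ℝ :=
  ∑ i, dist (p (i + 1)) (p i)

theorem cyclicPerimeter_update [Fact (1 < q)] (p : ZMod q → α) (i : ZMod q) (x : α) :
    cyclicPerimeter (Function.update p i x) =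
      cyclicPerimeter p + (dist x (p (i - 1)) + dist x (p (i + 1)))
        - (dist (p i) (p (i - 1)) + dist (p i) (p (i + 1))) := by
  have hprev : i - 1 ≠ i := pred_ne_self i
  have hnext : i + 1 ≠ i := add_ne_left.2 one_ne_zero
  have hchange := Fintype.sum_eq_add (f := fun k =>
      dist (Function.update p i x (k + 1)) (Function.update p i x k) - dist (p (k + 1)) (p k))
    (i - 1) i hprev fun k ⟨hk_prev, hk⟩ => by
      have hk_next : k + 1 ≠ i := fun h => hk_prev (eq_sub_of_add_eq h)
      simp only [Function.update_of_ne hk_next, Function.update_of_ne hk, sub_self]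
  simp only [sub_add_cancel, Function.update_self, Function.update_of_ne hprev,
    Function.update_of_ne hnext, Finset.sum_sub_distrib] at hchange
  rw [cyclicPerimeter, cyclicPerimeter, dist_comm x (p (i + 1)), dist_comm (p i) (p (i + 1))]
  linarith

theorem isMaxOn_dist_add_dist_of_maximal {K : Set α} {p : ZMod q → α} [Fact (1 < q)]
    (hp : ∀ i, p i ∈ K)
    (hmax : ∀ p' : ZMod q → α, (∀ i, p' i ∈ K) → cyclicPerimeter p' ≤ cyclicPerimeter p)
    (i : ZMod q) :
    IsMaxOn (fun x => dist x (p (i - 1)) + dist x (p (i + 1))) K (p i) := by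
  refine isMaxOn_iff.2 fun x hx => ?_
  have := hmax (Function.update p i x) fun j => by
    rcases eq_or_ne j i with rfl | hj
    · simpa
    · simpa [Function.update_of_ne hj] using hp j
  rw [cyclicPerimeter_update] at this
  linarith

end CyclicPerimeter

theorem max_perimeter_polygon_on_boundary_general
    (K : Set (EuclideanSpace ℝ (Fin 2)))
    (hint : (interior K).Nonempty)
    (q : ℕ) [NeZero q] (hq : 2 ≤ q)
    (p : ZMod q → EuclideanSpace ℝ (Fin 2)) (hp : ∀ i, p i ∈ K)
    (hmax : ∀ p' : ZMod q → EuclideanSpace ℝ (Fin 2), (∀ i, p' i ∈ K) →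
      ∑ i : ZMod q, ‖p' (i + 1) - p' i‖ ≤ ∑ i : ZMod q, ‖p (i + 1) - p i‖) :
    ∀ i : ZMod q, p i ∈ frontier K ∧ p (i + 1) ≠ p i := by
  have : Fact (1 < q) := ⟨hq⟩
  have hdim : 2 ≤ finrank ℝ (EuclideanSpace ℝ (Fin 2)) := by simp
  have hvertex := isMaxOn_dist_add_dist_of_maximal hp fun p' hp' => by
    simpa only [cyclicPerimeter, dist_eq_norm] using hmax p' hp'
  have hnot_interior : ∀ i, ∀ z ∈ interior K,
      ¬IsMaxOn (fun x => dist x (p (i - 1)) + dist x (p (i + 1))) K z := fun i z hz hz_max =>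
    not_isLocalMax_dist_add_dist hdim _ _ z (hz_max.isLocalMax (mem_interior_iff_mem_nhds.1 hz))
  intro i
  refine ⟨⟨subset_closure (hp i), fun hi => hnot_interior i (p i) hi (hvertex i)⟩, fun hrepeat => ?_⟩
  obtain ⟨z, hz⟩ := hint
  refine hnot_interior i z hz <| isMaxOn_iff.2 fun y hy => (isMaxOn_iff.1 (hvertex i) y hy).trans ?_
  simp only [hrepeat, dist_self, add_zero]
  exact (dist_triangle_left _ _ z).trans_eq (add_comm _ _)

/-- Any inscribed `q`-gon of maximal cyclic perimeter in a compact convex planar body with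
nonempty interior has all its vertices on the boundary, and consecutive vertices distinct. -/
theorem max_perimeter_polygon_on_boundary
    (K : Set (EuclideanSpace ℝ (Fin 2)))
    (hK : IsCompact K) (hconv : Convex ℝ K) (hint : (interior K).Nonempty)
    (q : ℕ) [NeZero q] (hq : 2 ≤ q)
    (p : ZMod q → EuclideanSpace ℝ (Fin 2)) (hp : ∀ i, p i ∈ K)
    (hmax : ∀ p' : ZMod q → EuclideanSpace ℝ (Fin 2), (∀ i, p' i ∈ K) →
      ∑ i : ZMod q, ‖p' (i + 1) - p' i‖ ≤ ∑ i : ZMod q, ‖p (i + 1) - p i‖) :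
    ∀ i : ZMod q, p i ∈ frontier K ∧ p (i + 1) ≠ p i :=
  max_perimeter_polygon_on_boundary_general K hint q hq p hp hmax
end
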